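/- arXiv:1707.01354 — 8 statements merged into one kernel-verified Lean document; each statement's English description precedes it below -/
import Mathlib

section
/- Let F ∈ F[x] be a univariate polynomial and let r > i be natural numbers. Then there exists a polynomial H ∈ F[x] such that the i-th Hasse derivative of F^r equals H(x)·F(x)^{r−i}. -/
/-!
Induction on `r` with the Leibniz rule for `F ^ r * F`: the term `D^i (F ^ r) * F` gains a
factor `F` over the induction hypothesis, and every other term contains `D^a (F ^ r)` with
`a < i`, which is already divisible by `F ^ (r - a)`, a multiple of `F ^ (r + 1 - i)`.
-/

open Polynomial Finset

theorem Polynomial.pow_sub_dvd_hasseDeriv_pow {R : Type*} [CommSemiring R] (F : R[X]) (r i : ℕ) :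
    F ^ (r - i) ∣ hasseDeriv i (F ^ r) := by
  induction r generalizing i with
  | zero => simp
  | succ r ih =>
    rw [pow_succ, hasseDeriv_mul]
    refine dvd_sum fun ab hab => ?_
    rw [HasAntidiagonal.mem_antidiagonal] at hab
    obtain ⟨a, b⟩ := ab
    rcases Nat.eq_zero_or_pos b with rfl | hb
    · obtain rfl : a = i := by simpa using hab
      rw [hasseDeriv_zero']
      calc F ^ (r + 1 - a) ∣ F ^ (r - a + 1) := pow_dvd_pow F (by omega)
        _ = F ^ (r - a) * F := pow_succ F (r - a)
        _ ∣ hasseDeriv a (F ^ r) * F := mul_dvd_mul (ih a) dvd_rfl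
    · exact ((pow_dvd_pow F (by omega)).trans (ih a)).mul_right _

theorem hasseDeriv_pow_dvd_general {K : Type*} [Field K] (F : Polynomial K) (r i : ℕ) :
    ∃ H : Polynomial K, Polynomial.hasseDeriv i (F ^ r) = H * F ^ (r - i) := by
  obtain ⟨H, hH⟩ := F.pow_sub_dvd_hasseDeriv_pow r i
  exact ⟨H, by rw [hH, mul_comm]⟩

/-- For `i < r`, the `i`-th Hasse derivative of `F^r` is divisible by `F^(r-i)`. -/
theorem hasseDeriv_pow_dvd {K : Type*} [Field K] (F : Polynomial K) (r i : ℕ) (h : i < r) :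
    ∃ H : Polynomial K, Polynomial.hasseDeriv i (F ^ r) = H * F ^ (r - i) :=
  hasseDeriv_pow_dvd_general F r i
end

section
/- Footprint bound with consecutive derivatives: let J ⊆ ℕᵐ be a finite decreasing set, I ⊆ F[x₁,...,xₘ] an ideal, S₁,...,Sₘ ⊆ F finite sets with defining polynomials G_j(x_j) = ∏_{s∈S_j}(x_j − s), and S = S₁×···×Sₘ. Let I_J = I + ⟨∏_{j=1}^m G_j(x_j)^{r_j} : (r₁,...,rₘ) ∉ J⟩ and let V_J(I) = {a ∈ S : F^(i)(a) = 0 for all F ∈ I, i ∈ J}. Then for any monomial ordering, #V_J(I) · #J ≤ #Δ(I_J), where Δ(I_J) is the set of monomials not in the leading monomial ideal of I_J. -/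
/-!
Fix `a ∈ V_J(I)` and `i ∈ J`. The Hasse derivative `F^(i)(a)` is the coefficient of `X^i` in
the Taylor shift `F(X + a)`. As `J` is decreasing, the polynomials whose shift has no monomial
from `J` form an ideal; it contains `I` by the choice of `a`, and every `∏ G_j^{r_j}` with
`r ∉ J` since its shift is divisible by `X^r`. So `F ↦ F^(i)(a)` is a functional on
`K[X] / I_J`. These `#V_J(I) · #J` functionals are linearly independent: against the
polynomials `(X - a)^i ∏_j ∏_{s ∈ S_j, s ≠ a_j} (X_j - s)^{e_j}`, with `e_j` exceeding every
exponent occurring in `J`, they form a triangular matrix with nonzero diagonal. The footprint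
monomials span `K[X] / I_J` (division algorithm), so there are at least `#V_J(I) · #J` of them.
-/

open MvPolynomial

/-- The `i`-th Hasse derivative of a multivariate polynomial, characterized by
`F(x+z) = Σ_i F^(i)(x) z^i`. -/
noncomputable def mvHasseDeriv {K : Type*} [CommSemiring K] {σ : Type*}
    (i : σ →₀ ℕ) (F : MvPolynomial σ K) : MvPolynomial σ K :=
  (AddMonoidAlgebra.coeff F).sum fun k c => monomial (k - i) ((i.prod fun j ij => (k j).choose ij : ℕ) * c)


/-- `i` is the leading monomial (exponent) of `F` with respect to the monomial order `ord`. -/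
def IsLeadingMonomial {K : Type*} [CommSemiring K] {m : ℕ} (ord : MonomialOrder (Fin m))
    (F : MvPolynomial (Fin m) K) (i : Fin m →₀ ℕ) : Prop :=
  i ∈ F.support ∧ ∀ k ∈ F.support, ord.toSyn k ≤ ord.toSyn i

/-- The footprint of an ideal: exponents of monomials not in the ideal generated by the
leading monomials of the (nonzero) elements of the ideal. -/
def footprint {K : Type*} [Field K] {m : ℕ} (ord : MonomialOrder (Fin m))
    (Kid : Ideal (MvPolynomial (Fin m) K)) : Set (Fin m →₀ ℕ) :=
  {i | (MvPolynomial.monomial i (1 : K)) ∉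
    Ideal.span {g | ∃ F ∈ Kid, ∃ l, IsLeadingMonomial ord F l ∧
      g = MvPolynomial.monomial l (1 : K)}}

theorem Finset.exists_forall_single_notMem {σ : Type*} (J : Finset (σ →₀ ℕ)) :
    ∃ e : σ → ℕ, ∀ j, Finsupp.single j (e j) ∉ J :=
  ⟨fun j => J.sup id j + 1, fun j h => by simpa using Finset.le_sup (f := id) h j⟩

section LinearAlgebra

theorem linearIndependent_of_triangular {R M ι α : Type*} [Ring R] [NoZeroDivisors R]
    [AddCommGroup M] [Module R M] [Preorder α] (f : ι → α) (φ : ι → M →ₗ[R] R) (v : ι → M)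
    (hdiag : ∀ p, φ p (v p) ≠ 0) (htri : ∀ p q, φ p (v q) ≠ 0 → q = p ∨ f q < f p) :
    LinearIndependent R v := by
  rw [linearIndependent_iff']
  intro s c hsum p hp
  by_contra hcp
  obtain ⟨q, ⟨hqs, hcq⟩, hmin⟩ := Set.Finite.exists_minimalFor f {q | q ∈ s ∧ c q ≠ 0}
    (s.finite_toSet.subset fun q hq => hq.1) ⟨p, hp, hcp⟩
  have hφ := congrArg (φ q) hsum
  rw [map_sum, map_zero, Finset.sum_eq_single_of_mem q hqs] at hφ
  · exact mul_ne_zero hcq (hdiag q) (by simpa using hφ)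
  · intro q' hq' hne
    rw [map_smul, smul_eq_mul]
    by_contra h
    obtain rfl | hlt := htri q q' (right_ne_zero_of_mul h)
    · exact hne rfl
    · exact (hmin ⟨hq', left_ne_zero_of_mul h⟩ hlt.le).not_gt hlt

theorem LinearIndependent.enatCard_le_encard {R M ι : Type*} [Ring R] [StrongRankCondition R]
    [AddCommGroup M] [Module R M] {v : ι → M} (hv : LinearIndependent R v) {s : Set M}
    (hs : Submodule.span R s = ⊤) : ENat.card ι ≤ s.encard := by
  have hrank : Module.rank R M ≤ Cardinal.mk s := by
    rw [← rank_top, ← hs]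
    exact rank_span_le s
  have := nontrivial_of_invariantBasisNumber R
  have := OrderHomClass.mono Cardinal.toENat
    (hv.cardinal_lift_le_rank.trans (Cardinal.lift_le.mpr hrank))
  rwa [Cardinal.toENat_lift, Cardinal.toENat_lift] at this

theorem encard_le_of_triangular {K M ι α : Type*} [DivisionRing K] [AddCommGroup M]
    [Module K M] [Preorder α] (N : Submodule K M) {s : Set M}
    (hs : Submodule.span K s ⊔ N = ⊤) (f : ι → α) (φ : ι → M →ₗ[K] K)
    (hφ : ∀ p, N ≤ LinearMap.ker (φ p)) (v : ι → M) (hdiag : ∀ p, φ p (v p) ≠ 0)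
    (htri : ∀ p q, φ p (v q) ≠ 0 → q = p ∨ f q < f p) : ENat.card ι ≤ s.encard := by
  have hv : LinearIndependent K (N.mkQ ∘ v) :=
    linearIndependent_of_triangular f (fun p => N.liftQ (φ p) (hφ p)) _ hdiag htri
  calc ENat.card ι ≤ (N.mkQ '' s).encard := hv.enatCard_le_encard <| by
        rw [Submodule.span_image, Submodule.map_mkQ_eq_top, sup_comm, hs]
    _ ≤ s.encard := Set.encard_image_le _ _

end LinearAlgebra

namespace MvPolynomial
variable {σ R : Type*}

noncomputable def taylor [CommSemiring R] (a : σ → R) :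
    MvPolynomial σ R →ₐ[R] MvPolynomial σ R :=
  aeval fun j => X j + C (a j)

section CommSemiring
variable [CommSemiring R]

theorem coeff_eq_zero_of_monomial_dvd {r k : σ →₀ ℕ} {P : MvPolynomial σ R}
    (h : monomial r 1 ∣ P) (hrk : ¬ r ≤ k) : coeff k P = 0 := by
  obtain ⟨Q, rfl⟩ := h
  rw [coeff_monomial_mul', if_neg hrk]

theorem prod_monomial {ι : Type*} (s : Finset ι) (u : ι → σ →₀ ℕ) (c : ι → R) :
    ∏ i ∈ s, monomial (u i) (c i) = monomial (∑ i ∈ s, u i) (∏ i ∈ s, c i) :=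
  AddMonoidAlgebra.prod_single s u c

theorem coeff_prod_X_add_C_pow [Fintype σ] (a : σ → R) (k i : σ →₀ ℕ) :
    coeff i (∏ j, (X j + C (a j)) ^ k j) = ∏ j, (k j).choose (i j) * a j ^ (k j - i j) := by
  classical
  have hexpand : ∀ j, (X j + C (a j)) ^ k j = ∑ n ∈ Finset.range (k j + 1),
      monomial (Finsupp.single j n) ((k j).choose n * a j ^ (k j - n)) := fun j => by
    rw [add_pow]
    refine Finset.sum_congr rfl fun n _ => ?_
    rw [X_pow_eq_monomial, ← C_pow, ← map_natCast C, mul_assoc, ← C_mul, mul_comm,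
      C_mul_monomial, mul_one, mul_comm]
  have hsingle : ∀ f : σ → ℕ, ∑ j, Finsupp.single j (f j) = i ↔ f = i := fun f => by
    rw [← Finsupp.equivFunOnFinite_symm_eq_sum, Equiv.symm_apply_eq]; rfl
  simp_rw [hexpand, Finset.prod_univ_sum, prod_monomial, coeff_sum, coeff_monomial, hsingle,
    Finset.sum_ite_eq', Fintype.mem_piFinset, Finset.mem_range, Nat.lt_succ_iff]
  split_ifs with hik
  · rfl
  · obtain ⟨j, hj⟩ := not_forall.mp hik
    exact (Finset.prod_eq_zero (Finset.mem_univ j)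
      (by simp [Nat.choose_eq_zero_of_lt (not_le.mp hj)])).symm

theorem coeff_taylor [Fintype σ] (a : σ → R) (i : σ →₀ ℕ) (F : MvPolynomial σ R) :
    coeff i (taylor a F) = eval a (mvHasseDeriv i F) := by
  rw [mvHasseDeriv, Finsupp.sum, map_sum]
  conv_lhs => rw [F.as_sum, map_sum, coeff_sum]
  refine Finset.sum_congr rfl fun k _ => ?_
  rw [taylor, aeval_monomial, algebraMap_eq, coeff_C_mul, Finsupp.prod_pow, coeff_prod_X_add_C_pow,
    eval_monomial, Finsupp.prod_fintype _ _ (fun j => Nat.choose_zero_right _), Finsupp.prod_pow]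
  simp only [Nat.cast_prod, Finsupp.tsub_apply, Finset.prod_mul_distrib]
  -- `mvHasseDeriv` reads coefficients through `AddMonoidAlgebra.coeff`
  change _ = _ * coeff k F * _
  ring

theorem constantCoeff_taylor (a : σ → R) (F : MvPolynomial σ R) :
    constantCoeff (taylor a F) = eval a F := by
  induction F using MvPolynomial.induction_on <;> simp_all [taylor]

theorem mem_span_monomial_compl_iff {J : Set (σ →₀ ℕ)} (hJ : IsLowerSet J)
    {P : MvPolynomial σ R} :
    P ∈ Ideal.span ((monomial · (1 : R)) '' Jᶜ) ↔ ∀ k ∈ J, coeff k P = 0 := by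
  rw [mem_ideal_span_monomial_image]
  constructor
  · intro h k hk
    by_contra hne
    obtain ⟨r, hr, hrk⟩ := h k (mem_support_iff.mpr hne)
    exact hr (hJ hrk hk)
  · exact fun h k hk => ⟨k, fun hkJ => mem_support_iff.mp hk (h k hkJ), le_rfl⟩

end CommSemiring

section CommRing
variable [CommRing R]

theorem taylor_X_sub_C (a : σ → R) (j : σ) (s : R) :
    taylor a (X j - C s) = X j + C (a j - s) := by
  simp [taylor, sub_eq_add_neg, add_assoc]

theorem taylor_prod_X_sub_C_pow [Fintype σ] (a : σ → R) (i : σ →₀ ℕ) :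
    taylor a (∏ j, (X j - C (a j)) ^ i j) = monomial i 1 := by
  simp [taylor_X_sub_C, monomial_eq, Finsupp.prod_fintype]

theorem X_dvd_taylor_prod_X_sub_C (a : σ → R) (j : σ) {T : Finset R} (h : a j ∈ T) :
    X j ∣ taylor a (∏ s ∈ T, (X j - C s)) := by
  rw [map_prod]
  exact dvd_trans (by simp [taylor_X_sub_C]) (Finset.dvd_prod_of_mem _ h)

theorem monomial_dvd_taylor_prod_pow [Fintype σ] {S : σ → Finset R} {a : σ → R}
    (ha : ∀ j, a j ∈ S j) (r : σ →₀ ℕ) :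
    monomial r 1 ∣ taylor a (∏ j, (∏ s ∈ S j, (X j - C s)) ^ r j) := by
  rw [monomial_eq, Finsupp.prod_fintype _ _ (fun _ => pow_zero _), C_1, one_mul, map_prod]
  exact Finset.prod_dvd_prod_of_dvd _ _ fun j _ =>
    map_pow (taylor a) _ _ ▸ pow_dvd_pow_of_dvd (X_dvd_taylor_prod_X_sub_C a j (ha j)) _

theorem le_comap_taylor_span_monomial_compl [Fintype σ] {J : Set (σ →₀ ℕ)}
    (hJ : IsLowerSet J) {I : Ideal (MvPolynomial σ R)} {S : σ → Finset R} {a : σ → R}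
    (haS : ∀ j, a j ∈ S j)
    (haI : ∀ F ∈ I, ∀ i ∈ J, eval a (mvHasseDeriv i F) = 0) :
    I ⊔ Ideal.span {P | ∃ r : σ →₀ ℕ, r ∉ J ∧ P = ∏ j, (∏ s ∈ S j, (X j - C s)) ^ r j} ≤
      (Ideal.span ((monomial · (1 : R)) '' Jᶜ)).comap (taylor a) := by
  refine sup_le (fun F hF => ?_) (Ideal.span_le.mpr ?_)
  · rw [Ideal.mem_comap, mem_span_monomial_compl_iff hJ]
    intro k hk
    rw [coeff_taylor]
    exact haI F hF k hk
  · rintro _ ⟨r, hr, rfl⟩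
    rw [SetLike.mem_coe, Ideal.mem_comap, mem_span_monomial_compl_iff hJ]
    exact fun k hk => coeff_eq_zero_of_monomial_dvd (monomial_dvd_taylor_prod_pow haS r)
      fun hrk => hr (hJ hrk hk)

section HermitePoly
variable [DecidableEq R] [Fintype σ] (S : σ → Finset R) (e : σ → ℕ)

noncomputable def hermitePoly (a : σ → R) (i : σ →₀ ℕ) : MvPolynomial σ R :=
  (∏ j, (X j - C (a j)) ^ i j) * ∏ j, (∏ s ∈ (S j).erase (a j), (X j - C s)) ^ e j

theorem taylor_hermitePoly (a : σ → R) (i : σ →₀ ℕ) :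
    taylor a (hermitePoly S e a i) =
      monomial i 1 * taylor a (∏ j, (∏ s ∈ (S j).erase (a j), (X j - C s)) ^ e j) := by
  rw [hermitePoly, map_mul, taylor_prod_X_sub_C_pow]

theorem coeff_taylor_hermitePoly_self_ne_zero [IsDomain R] (a : σ → R) (i : σ →₀ ℕ) :
    coeff i (taylor a (hermitePoly S e a i)) ≠ 0 := by
  rw [taylor_hermitePoly, coeff_monomial_mul', if_pos le_rfl, tsub_self, one_mul,
    ← constantCoeff_eq, constantCoeff_taylor]
  simp [Finset.prod_eq_zero_iff, sub_eq_zero]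

theorem le_of_coeff_taylor_hermitePoly_ne_zero {a : σ → R} {i k : σ →₀ ℕ}
    (h : coeff k (taylor a (hermitePoly S e a i)) ≠ 0) : i ≤ k := by
  by_contra hik
  exact h (coeff_eq_zero_of_monomial_dvd ⟨_, taylor_hermitePoly S e a i⟩ hik)

theorem X_pow_dvd_taylor_hermitePoly {a b : σ → R} {j : σ} (hb : b j ∈ S j) (hba : b j ≠ a j)
    (i : σ →₀ ℕ) : X j ^ e j ∣ taylor b (hermitePoly S e a i) := by
  rw [hermitePoly, map_mul,
    map_prod (taylor b) (fun j => (∏ s ∈ (S j).erase (a j), (X j - C s)) ^ e j)]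
  refine dvd_mul_of_dvd_right (dvd_trans ?_ (Finset.dvd_prod_of_mem _ (Finset.mem_univ j))) _
  rw [map_pow]
  exact pow_dvd_pow_of_dvd (X_dvd_taylor_prod_X_sub_C b j (Finset.mem_erase.mpr ⟨hba, hb⟩)) _

theorem coeff_taylor_hermitePoly_eq_zero_of_ne {J : Set (σ →₀ ℕ)} (hJ : IsLowerSet J)
    (he : ∀ j, Finsupp.single j (e j) ∉ J) {a b : σ → R} (hb : ∀ j, b j ∈ S j) (hba : b ≠ a)
    {k : σ →₀ ℕ} (hk : k ∈ J) (i : σ →₀ ℕ) : coeff k (taylor b (hermitePoly S e a i)) = 0 := by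
  obtain ⟨j, hj⟩ := Function.ne_iff.mp hba
  refine coeff_eq_zero_of_monomial_dvd ?_ fun hle => he j (hJ hle hk)
  rw [← X_pow_eq_monomial]
  exact X_pow_dvd_taylor_hermitePoly S e (hb j) hj i

end HermitePoly
end CommRing
end MvPolynomial

section Footprint
variable {K : Type*} [Field K] {m : ℕ} {ord : MonomialOrder (Fin m)}

theorem IsLeadingMonomial.degree_eq {F : MvPolynomial (Fin m) K} {l : Fin m →₀ ℕ}
    (h : IsLeadingMonomial ord F l) : ord.degree F = l :=
  ord.toSyn.injective <| le_antisymm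
    (h.2 _ (ord.degree_mem_support_iff F |>.mpr (support_nonempty.mp ⟨l, h.1⟩)))
    (ord.le_degree h.1)

theorem mem_footprint_of_forall_not_degree_le {I : Ideal (MvPolynomial (Fin m) K)}
    {c : Fin m →₀ ℕ} (h : ∀ F ∈ I, F ≠ 0 → ¬ ord.degree F ≤ c) : c ∈ footprint ord I := by
  have hgen : {g | ∃ F ∈ I, ∃ l, IsLeadingMonomial ord F l ∧ g = monomial l (1 : K)} =
      (monomial · 1) '' {l | ∃ F ∈ I, IsLeadingMonomial ord F l} := by
    ext; constructor
    · rintro ⟨F, hF, l, hl, rfl⟩; exact ⟨l, ⟨F, hF, hl⟩, rfl⟩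
    · rintro ⟨l, ⟨F, hF, hl⟩, rfl⟩; exact ⟨F, hF, l, hl, rfl⟩
  intro hc
  rw [hgen, mem_ideal_span_monomial_image] at hc
  obtain ⟨l, ⟨F, hF, hl⟩, hle⟩ := hc c (by simp)
  exact h F hF (support_nonempty.mp ⟨l, hl.1⟩) (hl.degree_eq ▸ hle)

variable (ord) in
theorem span_monomial_footprint_sup_eq_top (I : Ideal (MvPolynomial (Fin m) K)) :
    Submodule.span K ((monomial · (1 : K)) '' footprint ord I) ⊔ I.restrictScalars K = ⊤ := by
  refine eq_top_iff.mpr fun f _ => ?_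
  obtain ⟨g, r, rfl, -, hr⟩ := ord.div_set (B := {b | b ∈ I ∧ b ≠ 0})
    (fun b hb => (ord.leadingCoeff_ne_zero_iff.mpr hb.2).isUnit) f
  rw [add_comm]
  refine Submodule.add_mem_sup ?_ ?_
  · rw [r.as_sum]
    refine Submodule.sum_mem _ fun c hc => ?_
    rw [← mul_one (coeff c r), ← smul_eq_mul, ← smul_monomial]
    exact Submodule.smul_mem _ _ <| Submodule.subset_span
      ⟨c, mem_footprint_of_forall_not_degree_le fun F hF hF0 => hr c hc F ⟨hF, hF0⟩, rfl⟩
  · have hspan : Submodule.span (MvPolynomial (Fin m) K) (Set.range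
        (Subtype.val : {b | b ∈ I ∧ b ≠ 0} → MvPolynomial (Fin m) K)) ≤ I := by
      rw [Submodule.span_le]
      rintro _ ⟨b, rfl⟩
      exact b.2.1
    rw [← Finsupp.range_linearCombination] at hspan
    exact hspan (LinearMap.mem_range_self _ g)

end Footprint

/-- Footprint bound with consecutive derivatives:
`#V_J(I) ⋅ #J ≤ #Δ(I_J)` for any monomial ordering. -/
theorem footprint_bound_consecutive_derivatives {K : Type*} [Field K] {m : ℕ}
    (ord : MonomialOrder (Fin m)) (J : Finset (Fin m →₀ ℕ))
    (hJ : ∀ i ∈ J, ∀ k : Fin m →₀ ℕ, k ≤ i → k ∈ J)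
    (I : Ideal (MvPolynomial (Fin m) K)) (S : Fin m → Finset K) :
    ({a : Fin m → K | (∀ j, a j ∈ S j) ∧
        ∀ F ∈ I, ∀ i ∈ J, MvPolynomial.eval a (mvHasseDeriv i F) = 0}.encard)
        * (J.card : ℕ∞)
      ≤ (footprint ord (I ⊔ Ideal.span {P | ∃ r : Fin m →₀ ℕ, r ∉ J ∧
          P = ∏ j, (∏ s ∈ S j, (X j - C s)) ^ (r j)})).encard := by
  classical
  set IJ := I ⊔ Ideal.span {P | ∃ r : Fin m →₀ ℕ, r ∉ J ∧
    P = ∏ j, (∏ s ∈ S j, (X j - C s)) ^ (r j)}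
  set V := {a : Fin m → K | (∀ j, a j ∈ S j) ∧
    ∀ F ∈ I, ∀ i ∈ J, MvPolynomial.eval a (mvHasseDeriv i F) = 0}
  have hJ' : IsLowerSet (J : Set (Fin m →₀ ℕ)) := fun i k hki hi => hJ i hi k hki
  obtain ⟨e, he⟩ := J.exists_forall_single_notMem
  let φ (p : V × J) : MvPolynomial (Fin m) K →ₗ[K] K :=
    (lcoeff K p.2.1).comp (taylor p.1.1).toLinearMap
  have hφ (p : V × J) : IJ.restrictScalars K ≤ LinearMap.ker (φ p) := fun F hF =>
    (mem_span_monomial_compl_iff hJ').mp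
      (le_comap_taylor_span_monomial_compl hJ' p.1.2.1 p.1.2.2 hF) p.2 p.2.2
  have htri (p q : V × J) (h : φ p (hermitePoly S e q.1 q.2) ≠ 0) :
      q = p ∨ q.2.1 < p.2.1 := by
    obtain ⟨⟨b, hb⟩, ⟨k, hk⟩⟩ := p
    obtain ⟨⟨a, _⟩, ⟨i, _⟩⟩ := q
    obtain rfl | hba := eq_or_ne b a
    · obtain rfl | hlt := (le_of_coeff_taylor_hermitePoly_ne_zero S e h).eq_or_lt
      exacts [Or.inl rfl, Or.inr hlt]
    · exact absurd (coeff_taylor_hermitePoly_eq_zero_of_ne S e hJ' he hb.1 hba hk i) h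
  calc V.encard * J.card = ENat.card (V × J) := by simp [ENat.card_prod]
    _ ≤ ((monomial · (1 : K)) '' footprint ord IJ).encard :=
      encard_le_of_triangular _ (span_monomial_footprint_sup_eq_top ord IJ) (fun p => p.2.1) φ hφ
        (fun p => hermitePoly S e p.1 p.2)
        (fun p => coeff_taylor_hermitePoly_self_ne_zero S e p.1 p.2) htri
    _ ≤ (footprint ord IJ).encard := Set.encard_image_le _ _
end

section
/- Counting lemma: let J ⊆ ℕᵐ be a finite decreasing set and S₁,...,Sₘ ⊆ F finite nonempty sets. Define J_S = {i ∈ ℕᵐ : i ⋡ (r₁#S₁,...,rₘ#Sₘ) for all (r₁,...,rₘ) ∉ J}. Then #J_S = #S₁·#S₂···#Sₘ · #J. -/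
/-!
Write `c j = #S j`. Since `r j * c j ≤ i j ↔ r j ≤ i j / c j`, a point `i` lies in `J_S` exactly
when its coordinatewise quotient `i / c` lies in the lower set `J`. The fibre of `i ↦ i / c` over
`r` is the box `∏ j, [r j * c j, r j * c j + c j)` with `∏ j, c j` points, so `J_S` is the disjoint
union of `#J` such boxes.
-/

open Finset

section CoordDiv

variable {ι : Type*} [Fintype ι] (c : ι → ℕ)

noncomputable def coordDiv (i : ι →₀ ℕ) : ι →₀ ℕ :=
  Finsupp.equivFunOnFinite.symm fun j => i j / c j

@[simp]
theorem coordDiv_apply (i : ι →₀ ℕ) (j : ι) : coordDiv c i j = i j / c j := rfl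

noncomputable def divBlock [DecidableEq ι] (r : ι →₀ ℕ) : Finset (ι →₀ ℕ) :=
  (Fintype.piFinset fun j => Ico (r j * c j) (r j * c j + c j)).map
    Finsupp.equivFunOnFinite.symm.toEmbedding

variable {c}

theorem le_coordDiv_iff (hc : ∀ j, 0 < c j) {r i : ι →₀ ℕ} :
    r ≤ coordDiv c i ↔ ∀ j, r j * c j ≤ i j := by
  simp only [Finsupp.le_def, coordDiv_apply, Nat.le_div_iff_mul_le (hc _)]

theorem forall_notMem_not_mul_le_iff_coordDiv_mem (hc : ∀ j, 0 < c j) {J : Finset (ι →₀ ℕ)}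
    (hJ : IsLowerSet (J : Set (ι →₀ ℕ))) {i : ι →₀ ℕ} :
    (∀ r, r ∉ J → ¬ ∀ j, r j * c j ≤ i j) ↔ coordDiv c i ∈ J := by
  simp only [← le_coordDiv_iff hc]
  refine ⟨fun h => ?_, fun hi r hr hle => hr (hJ hle hi)⟩
  by_contra hi
  exact h _ hi le_rfl

theorem mem_divBlock_iff [DecidableEq ι] (hc : ∀ j, 0 < c j) {r i : ι →₀ ℕ} :
    i ∈ divBlock c r ↔ coordDiv c i = r := by
  simp only [divBlock, mem_map_equiv, Fintype.mem_piFinset, mem_Ico, Finsupp.ext_iff,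
    coordDiv_apply]
  refine forall_congr' fun j => ?_
  rw [Nat.div_eq_iff (hc j)]
  simp only [Equiv.symm_symm, Finsupp.equivFunOnFinite_apply]
  have := hc j
  omega

theorem card_divBlock [DecidableEq ι] (r : ι →₀ ℕ) : #(divBlock c r) = ∏ j, c j := by
  simp [divBlock, Fintype.card_piFinset]

theorem encard_coordDiv_preimage (hc : ∀ j, 0 < c j) (J : Finset (ι →₀ ℕ)) :
    (coordDiv c ⁻¹' J).encard = ((∏ j, c j) * #J : ℕ) := by
  classical
  have hunion : coordDiv c ⁻¹' J = ↑(J.biUnion (divBlock c)) := by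
    ext i
    simp [mem_divBlock_iff hc]
  have hdisj : (J : Set (ι →₀ ℕ)).PairwiseDisjoint (divBlock c) := fun r _ s _ hrs =>
    disjoint_left.2 fun i hir his =>
      hrs ((mem_divBlock_iff hc).1 hir ▸ (mem_divBlock_iff hc).1 his)
  rw [hunion, Set.encard_coe_eq_coe_finsetCard, card_biUnion hdisj]
  simp [card_divBlock, mul_comm]

end CoordDiv

theorem JS_card_general {K : Type*} {m : ℕ} (J : Finset (Fin m →₀ ℕ))
    (hJ : ∀ i ∈ J, ∀ k : Fin m →₀ ℕ, k ≤ i → k ∈ J)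
    (S : Fin m → Finset K) (hS : ∀ j, (S j).Nonempty) :
    {i : Fin m →₀ ℕ | ∀ r : Fin m →₀ ℕ, r ∉ J →
        ¬ (∀ j, r j * (S j).card ≤ i j)}.encard
      = ((∏ j, (S j).card : ℕ) * J.card : ℕ) := by
  have hc : ∀ j, 0 < (S j).card := fun j => card_pos.2 (hS j)
  have hJ' : IsLowerSet (J : Set (Fin m →₀ ℕ)) := fun r k hkr hr => hJ r hr k hkr
  simp_rw [forall_notMem_not_mul_le_iff_coordDiv_mem hc hJ']
  exact encard_coordDiv_preimage hc J

/-- Counting lemma: `#J_S = #S₁ ⋯ #Sₘ ⋅ #J` for a finite decreasing set `J` and nonempty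
finite sets `S₁,…,Sₘ`. -/
theorem JS_card {K : Type*} [Field K] {m : ℕ} (J : Finset (Fin m →₀ ℕ))
    (hJ : ∀ i ∈ J, ∀ k : Fin m →₀ ℕ, k ≤ i → k ∈ J)
    (S : Fin m → Finset K) (hS : ∀ j, (S j).Nonempty) :
    {i : Fin m →₀ ℕ | ∀ r : Fin m →₀ ℕ, r ∉ J →
        ¬ (∀ j, r j * (S j).card ≤ i j)}.encard
      = ((∏ j, (S j).card : ℕ) * J.card : ℕ) :=
  JS_card_general J hJ S hS
end

section
/- Structure of J_S: let J ⊆ ℕᵐ be a finite decreasing set and S₁,...,Sₘ ⊆ F finite nonempty sets. Then J_S = {(p₁#S₁+t₁, ..., pₘ#Sₘ+tₘ) : (p₁,...,pₘ) ∈ J, 0 ≤ t_j < #S_j for all j}, where J_S = {i ∈ ℕᵐ : i ⋡ (r₁#S₁,...,rₘ#Sₘ) for all (r₁,...,rₘ) ∉ J}. -/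
/-- Structure of `J_S`: it consists exactly of the points `(p₁#S₁+t₁,…,pₘ#Sₘ+tₘ)` with
`p ∈ J` and `0 ≤ t_j < #S_j`. -/
theorem JS_structure {K : Type*} [Field K] {m : ℕ} (J : Finset (Fin m →₀ ℕ))
    (hJ : ∀ i ∈ J, ∀ k : Fin m →₀ ℕ, k ≤ i → k ∈ J)
    (S : Fin m → Finset K) (hS : ∀ j, (S j).Nonempty) :
    {i : Fin m →₀ ℕ | ∀ r : Fin m →₀ ℕ, r ∉ J →
        ¬ (∀ j, r j * (S j).card ≤ i j)}
      = {i : Fin m →₀ ℕ | ∃ p ∈ J, ∃ t : Fin m → ℕ,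
          (∀ j, t j < (S j).card) ∧ ∀ j, i j = p j * (S j).card + t j} := by
  have hc : ∀ j, 0 < (S j).card := fun j => Finset.card_pos.2 (hS j)
  ext i
  simp only [Set.mem_setOf_eq]
  constructor
  · intro h
    set p : Fin m →₀ ℕ := Finsupp.equivFunOnFinite.symm (fun j => i j / (S j).card) with hp
    have hpj : ∀ j, p j = i j / (S j).card := fun j => rfl
    have hpJ : p ∈ J := by
      by_contra hpJ
      exact h p hpJ (fun j => by rw [hpj]; exact Nat.div_mul_le_self _ _)
    refine ⟨p, hpJ, fun j => i j % (S j).card, fun j => Nat.mod_lt _ (hc j), fun j => ?_⟩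
    rw [hpj]; exact (Nat.div_add_mod' (i j) _).symm
  · rintro ⟨p, hpJ, t, ht, hi⟩ r hrJ hr
    refine hrJ (hJ p hpJ r fun j => ?_)
    have := hr j
    rw [hi j] at this
    by_contra hlt
    push_neg at hlt
    have h2 : (p j + 1) * (S j).card ≤ r j * (S j).card := Nat.mul_le_mul_right _ hlt
    rw [add_mul, one_mul] at h2
    have h3 := ht j
    omega
end

section
/- Weighted ball estimate: for any r ∈ ℕ₊ and any vector of positive weights w = (w₁,...,wₘ) ∈ ℕ₊ᵐ, letting B(w; r) = #{i ∈ ℕᵐ : i₁w₁+···+iₘwₘ < r}, it holds that C(m+r−1, m) ≤ w₁w₂···wₘ · B(w; r), where C(m+r−1, m) is the binomial coefficient. -/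
open Finset

/-- Weighted ball estimate: `C(m+r−1, m) ≤ w₁⋯wₘ ⋅ B(w; r)`. -/
theorem weighted_ball_estimate {m r : ℕ} (hr : 0 < r) (w : Fin m → ℕ) (hw : ∀ j, 0 < w j) :
    (((m + r - 1).choose m : ℕ) : ℕ∞)
      ≤ ((∏ j, w j : ℕ) : ℕ∞) * {i : Fin m →₀ ℕ | (∑ j, i j * w j) < r}.encard := by
  classical
  set S : Set (Fin m →₀ ℕ) := {i : Fin m →₀ ℕ | (∑ j, i j * w j) < r} with hS
  have hfin : S.Finite := by
    have h1 : (Set.univ.pi (fun _ : Fin m => Set.Iio r)).Finite :=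
      Set.Finite.pi (fun _ => Set.finite_Iio r)
    refine (h1.image (Finsupp.equivFunOnFinite.symm)).subset ?_
    rintro i hi
    have hi' : (∑ j, i j * w j) < r := hi
    refine ⟨⇑i, fun j _ => ?_, by simp⟩
    have hterm : i j * w j < r :=
      lt_of_le_of_lt (Finset.single_le_sum (f := fun k => i k * w k)
        (fun k _ => Nat.zero_le _) (mem_univ j)) hi'
    exact lt_of_le_of_lt (Nat.le_mul_of_pos_right _ (hw j)) hterm
  rw [hfin.encard_eq_coe_toFinset_card, ← Nat.cast_mul, Nat.cast_le]
  -- the total count of a multiset of size `r - 1`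
  have hcount : ∀ s : Sym (Fin (m + 1)) (r - 1),
      (∑ a : Fin (m + 1), Multiset.count a (s : Multiset (Fin (m + 1)))) = r - 1 := by
    intro s
    calc (∑ a : Fin (m + 1), Multiset.count a (s : Multiset (Fin (m + 1))))
        = ∑ a ∈ (s : Multiset (Fin (m + 1))).toFinset,
            Multiset.count a (s : Multiset (Fin (m + 1))) :=
          (Finset.sum_subset (Finset.subset_univ _)
            (fun a _ ha => Multiset.count_eq_zero.mpr (by simpa using ha))).symm
      _ = Multiset.card (s : Multiset (Fin (m + 1))) := Multiset.toFinset_sum_count_eq _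
      _ = r - 1 := s.2
  -- the projection map
  set G : Sym (Fin (m + 1)) (r - 1) → (Fin m →₀ ℕ) := fun s =>
    Finsupp.equivFunOnFinite.symm
      (fun j => Multiset.count (Fin.castSucc j) (s : Multiset (Fin (m + 1))) / w j) with hG
  have hGapp : ∀ s j, G s j = Multiset.count (Fin.castSucc j) (s : Multiset (Fin (m + 1))) / w j :=
    fun s j => rfl
  -- `G` maps into the ball
  have hmaps : ∀ s : Sym (Fin (m + 1)) (r - 1), G s ∈ hfin.toFinset := by
    intro s
    rw [Set.Finite.mem_toFinset]
    show (∑ j, G s j * w j) < r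
    calc (∑ j, G s j * w j)
        ≤ ∑ j, Multiset.count (Fin.castSucc j) (s : Multiset (Fin (m + 1))) := by
          refine Finset.sum_le_sum fun j _ => ?_
          rw [hGapp]; exact Nat.div_mul_le_self _ _
      _ ≤ ∑ a : Fin (m + 1), Multiset.count a (s : Multiset (Fin (m + 1))) := by
          rw [Fin.sum_univ_castSucc]; exact Nat.le_add_right _ _
      _ = r - 1 := hcount s
      _ < r := Nat.sub_lt hr one_pos
  -- fibers of `G` have at most `∏ j, w j` elements
  have hfiber : ∀ i ∈ hfin.toFinset,
      #{s ∈ (univ : Finset (Sym (Fin (m + 1)) (r - 1))) | G s = i} ≤ ∏ j, w j := by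
    intro i _
    have hpi : ∏ j, w j = Fintype.card (∀ j : Fin m, Fin (w j)) := by
      simp [Fintype.card_pi]
    rw [hpi, ← Finset.card_univ]
    refine Finset.card_le_card_of_injOn
      (fun s j => (⟨Multiset.count (Fin.castSucc j) (s : Multiset (Fin (m + 1))) % w j,
        Nat.mod_lt _ (hw j)⟩ : Fin (w j))) (fun _ _ => mem_univ _) ?_
    intro s hs t ht heq
    rw [Finset.mem_coe, Finset.mem_filter] at hs ht
    -- counts agree on `castSucc`
    have hcs : ∀ j : Fin m,
        Multiset.count (Fin.castSucc j) (s : Multiset (Fin (m + 1)))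
          = Multiset.count (Fin.castSucc j) (t : Multiset (Fin (m + 1))) := by
      intro j
      have h1 : G s j = G t j := by rw [hs.2, ht.2]
      rw [hGapp, hGapp] at h1
      have h2 : (Multiset.count (Fin.castSucc j) (s : Multiset (Fin (m + 1)))) % w j
          = (Multiset.count (Fin.castSucc j) (t : Multiset (Fin (m + 1)))) % w j :=
        Fin.mk.inj_iff.mp (congrFun heq j)
      calc Multiset.count (Fin.castSucc j) (s : Multiset (Fin (m + 1)))
          = w j * (Multiset.count (Fin.castSucc j) (s : Multiset (Fin (m + 1))) / w j)
            + Multiset.count (Fin.castSucc j) (s : Multiset (Fin (m + 1))) % w j :=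
            (Nat.div_add_mod _ _).symm
        _ = w j * (Multiset.count (Fin.castSucc j) (t : Multiset (Fin (m + 1))) / w j)
            + Multiset.count (Fin.castSucc j) (t : Multiset (Fin (m + 1))) % w j := by
            rw [h1, h2]
        _ = Multiset.count (Fin.castSucc j) (t : Multiset (Fin (m + 1))) :=
            Nat.div_add_mod _ _
    -- counts agree at `last` too
    have hsum_s := hcount s
    have hsum_t := hcount t
    rw [Fin.sum_univ_castSucc] at hsum_s hsum_t
    have hsumeq : (∑ j : Fin m, Multiset.count (Fin.castSucc j) (s : Multiset (Fin (m + 1))))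
        = ∑ j : Fin m, Multiset.count (Fin.castSucc j) (t : Multiset (Fin (m + 1))) :=
      Finset.sum_congr rfl fun j _ => hcs j
    have hlast : Multiset.count (Fin.last m) (s : Multiset (Fin (m + 1)))
        = Multiset.count (Fin.last m) (t : Multiset (Fin (m + 1))) := by omega
    refine Subtype.ext (Multiset.ext.mpr fun a => ?_)
    refine Fin.lastCases ?_ ?_ a
    · exact hlast
    · exact hcs
  -- put everything together
  have e2 : (m + r - 1).choose m = (m + r - 1).choose (r - 1) := by
    rw [← Nat.choose_symm (by omega : m ≤ m + r - 1)]
    congr 1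
    omega
  calc (m + r - 1).choose m
      = Fintype.card (Sym (Fin (m + 1)) (r - 1)) := by
        rw [Sym.card_sym_eq_choose, Fintype.card_fin]
        rw [e2]
        congr 1
        omega
    _ = #(univ : Finset (Sym (Fin (m + 1)) (r - 1))) := Finset.card_univ.symm
    _ ≤ (∏ j, w j) * #hfin.toFinset :=
        Finset.card_le_mul_card_image_of_maps_to (fun s _ => hmaps s) _ hfiber
end

section
/- Alon's combinatorial Nullstellensatz: let F ∈ F[x₁,...,xₘ] with deg F = i₁+···+iₘ and suppose the coefficient of x₁^{i₁}···xₘ^{iₘ} in F is nonzero. If S₁,...,Sₘ ⊆ F are finite sets with #S_j > i_j for all j, then there exist s₁ ∈ S₁,...,sₘ ∈ Sₘ with F(s₁,...,sₘ) ≠ 0. -/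
open MvPolynomial

section Aux

variable {K : Type*} [Field K] {m : ℕ}

private lemma degX_mul (j : Fin m) (Q : MvPolynomial (Fin m) K) (hQ : Q ≠ 0) :
    (X j * Q).totalDegree = Q.totalDegree + 1 := by
  apply le_antisymm
  · simpa [add_comm] using totalDegree_mul (X j) Q
  · obtain ⟨d, hd, hdeg⟩ := Finset.exists_mem_eq_sup Q.support
      (by simpa using hQ) (fun d => d.sum fun _ e => e)
    have h1 : coeff (Finsupp.single j 1 + d) (X j * Q) = coeff d Q := coeff_X_mul d j Q
    have h2 : coeff d Q ≠ 0 := mem_support_iff.mp hd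
    have := le_totalDegree (p := X j * Q) (s := Finsupp.single j 1 + d)
      (mem_support_iff.mpr (h1 ▸ h2))
    rw [Finsupp.sum_add_index (by simp) (by simp)] at this
    simp only [Finsupp.sum_single_index] at this
    rw [totalDegree, hdeg]
    omega

private lemma deg_X_sub_C_mul (j : Fin m) (a : K) (Q : MvPolynomial (Fin m) K) (hQ : Q ≠ 0) :
    ((X j - C a) * Q).totalDegree = Q.totalDegree + 1 := by
  have : (X j - C a) * Q = X j * Q + (-(C a * Q)) := by ring
  rw [this, totalDegree_add_eq_left_of_totalDegree_lt, degX_mul j Q hQ]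
  rw [totalDegree_neg, degX_mul j Q hQ]
  calc (C a * Q).totalDegree ≤ 0 + Q.totalDegree := by
        simpa using totalDegree_mul (C a) Q
    _ < Q.totalDegree + 1 := by omega

private lemma subst_dvd (j : Fin m) (a : K) (F : MvPolynomial (Fin m) K) :
    (X j - C a) ∣ (F - aeval (Function.update X j (C a)) F) := by
  induction F using MvPolynomial.induction_on with
  | C c => simp
  | add p q hp hq =>
      have : p + q - aeval (Function.update X j (C a)) (p + q)
          = (p - aeval (Function.update X j (C a)) p)
            + (q - aeval (Function.update X j (C a)) q) := by
        rw [map_add]; ring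
      rw [this]; exact dvd_add hp hq
  | mul_X p k hp =>
      have : p * X k - aeval (Function.update X j (C a)) (p * X k)
          = (p - aeval (Function.update X j (C a)) p) * X k
            + aeval (Function.update X j (C a)) p
              * (X k - Function.update X j (C a) k) := by
        rw [map_mul, aeval_X]; ring
      rw [this]
      refine dvd_add (Dvd.dvd.mul_right hp _) ?_
      by_cases hk : k = j
      · subst hk; rw [Function.update_self]; exact Dvd.dvd.mul_left dvd_rfl _
      · rw [Function.update_of_ne hk]; simp

private lemma subst_degreeOf (j : Fin m) (a : K) (F : MvPolynomial (Fin m) K) :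
    degreeOf j (aeval (Function.update X j (C a)) F) = 0 := by
  have h : ∀ F : MvPolynomial (Fin m) K,
      degreeOf j (aeval (Function.update X j (C a)) F) ≤ 0 := by
    intro F
    induction F using MvPolynomial.induction_on with
    | C c => simp [aeval_C, degreeOf_C]
    | add p q hp hq =>
        rw [map_add]
        exact le_trans (degreeOf_add_le _ _ _) (by omega)
    | mul_X p k hp =>
        rw [map_mul, aeval_X]
        refine le_trans (degreeOf_mul_le _ _ _) ?_
        have h2 : degreeOf j (Function.update X j (C a) k) = 0 := by
          by_cases hk : k = j
          · subst hk; rw [Function.update_self]; exact degreeOf_C a _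
          · rw [Function.update_of_ne hk]
            simp [degreeOf_X, Ne.symm hk]
        omega
  exact Nat.le_zero.mp (h F)

private lemma subst_deg_le (j : Fin m) (a : K) (F : MvPolynomial (Fin m) K) :
    (aeval (Function.update X j (C a)) F).totalDegree ≤ F.totalDegree := by
  conv_lhs => rw [F.as_sum]
  rw [map_sum]
  apply totalDegree_finsetSum_le
  intro d hd
  rw [aeval_monomial, Finsupp.prod]
  refine le_trans (totalDegree_mul _ _) ?_
  have h1 : (algebraMap K (MvPolynomial (Fin m) K) (coeff d F)).totalDegree = 0 :=
    totalDegree_C _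
  have h2 : (∏ k ∈ d.support, Function.update X j (C a) k ^ d k).totalDegree
      ≤ ∑ k ∈ d.support, d k := by
    refine le_trans (totalDegree_finset_prod _ _) ?_
    apply Finset.sum_le_sum
    intro k _
    refine le_trans (totalDegree_pow _ _) ?_
    have : (Function.update X j (C a) k).totalDegree ≤ 1 := by
      by_cases hk : k = j
      · subst hk; rw [Function.update_self]; simp [totalDegree_C]
      · rw [Function.update_of_ne hk]; simp [totalDegree_X]
    calc d k * (Function.update X j (C a) k).totalDegree ≤ d k * 1 :=
          Nat.mul_le_mul_left _ this
      _ = d k := mul_one _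
  have h3 : ∑ k ∈ d.support, d k ≤ F.totalDegree := le_totalDegree hd
  omega

private lemma eval_subst (j : Fin m) (a : K) (F : MvPolynomial (Fin m) K)
    (s : Fin m → K) :
    eval s (aeval (Function.update X j (C a)) F) = eval (Function.update s j a) F := by
  rw [aeval_def, eval₂_comp_left (eval s)]
  have h1 : (eval s).comp (algebraMap K (MvPolynomial (Fin m) K)) = RingHom.id K := by
    ext c; simp [algebraMap_eq]
  have h2 : (eval s) ∘ (Function.update X j (C a)) = Function.update s j a := by
    funext k
    by_cases hk : k = j
    · subst hk; simp
    · simp [Function.update_of_ne hk]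
  rw [h1, h2, eval₂_id]

private lemma alon_aux : ∀ (n : ℕ) (F : MvPolynomial (Fin m) K) (i : Fin m →₀ ℕ),
    MvPolynomial.coeff i F ≠ 0 → F.totalDegree ≤ n → (∑ j, i j) = n →
    ∀ S : Fin m → Finset K, (∀ j, i j < (S j).card) →
    ∃ s : Fin m → K, (∀ j, s j ∈ S j) ∧ MvPolynomial.eval s F ≠ 0 := by
  intro n
  induction n using Nat.strong_induction_on with
  | _ n IH =>
  intro F i hc hdeg hsum S hS
  classical
  rcases Nat.eq_zero_or_pos n with hn | hn
  · -- base case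
    subst hn
    have hi : i = 0 := by
      ext j
      have := Finset.sum_eq_zero_iff.mp hsum j (Finset.mem_univ j)
      simpa using this
    have hF : F = C (coeff 0 F) := by
      ext d
      rw [coeff_C]
      by_cases hd : d = 0
      · subst hd; simp
      · rw [if_neg (fun h => hd h.symm)]
        by_contra hcd
        have hds : d ∈ F.support := mem_support_iff.mpr hcd
        have h0 := (totalDegree_eq_zero_iff (Fin m) F).mp (Nat.le_zero.mp hdeg) d hds
        exact hd (Finsupp.ext h0)
    have hne : ∀ j, (S j).Nonempty := fun j =>
      Finset.card_pos.mp (lt_of_le_of_lt (Nat.zero_le _) (hS j))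
    refine ⟨fun j => (hne j).choose, fun j => (hne j).choose_spec, ?_⟩
    rw [hF]
    simpa using (hi ▸ hc)
  · -- inductive step
    by_contra hcon
    push_neg at hcon
    -- find a coordinate with i j ≥ 1
    have hex : ∃ j : Fin m, i j ≠ 0 := by
      by_contra hall
      push_neg at hall
      rw [Finset.sum_eq_zero (fun j _ => hall j)] at hsum
      omega
    obtain ⟨j, hij⟩ := hex
    obtain ⟨a, ha⟩ := Finset.card_pos.mp
      (lt_of_le_of_lt (Nat.zero_le _) (hS j))
    set R := aeval (Function.update X j (C a)) F with hR
    obtain ⟨Q, hQ⟩ := subst_dvd j a F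
    have hFQ : F = (X j - C a) * Q + R := by rw [← hQ]; ring
    -- i decomposes
    set i' : Fin m →₀ ℕ := i - Finsupp.single j 1 with hi'
    have hidec : i = Finsupp.single j 1 + i' := by
      ext k
      rw [hi']
      simp only [Finsupp.add_apply, Finsupp.tsub_apply, Finsupp.single_apply]
      by_cases hk : j = k
      · subst hk; simp; omega
      · simp [hk]
    -- coeff i R = 0
    have hcR : coeff i R = 0 := by
      by_contra hcR
      have := (degreeOf_lt_iff (n := j) (f := R) (d := 1) one_pos).mp
        (by rw [subst_degreeOf]; omega) i (mem_support_iff.mpr hcR)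
      omega
    -- Q ≠ 0
    have hQne : Q ≠ 0 := by
      intro h0
      rw [h0, mul_zero] at hQ
      have : F = R := by linear_combination hQ
      rw [this] at hc
      exact hc hcR
    -- degree bound on Q
    have hdegQ : Q.totalDegree + 1 ≤ n := by
      have h1 : ((X j - C a) * Q).totalDegree = Q.totalDegree + 1 :=
        deg_X_sub_C_mul j a Q hQne
      have h2 : ((X j - C a) * Q).totalDegree ≤ n := by
        rw [← hQ]
        refine le_trans (totalDegree_sub F R) ?_
        exact max_le hdeg (le_trans (subst_deg_le j a F) hdeg)
      omega
    have hsum_supp : ∀ d : Fin m →₀ ℕ, (∑ k ∈ d.support, d k) = ∑ k, d k :=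
      fun d => Finset.sum_subset (Finset.subset_univ _)
        (fun k _ hk => Finsupp.notMem_support_iff.mp hk)
    -- coeff i Q = 0
    have hciQ : coeff i Q = 0 := by
      apply coeff_eq_zero_of_totalDegree_lt
      rw [hsum_supp i, hsum]
      omega
    -- coeff i' Q = coeff i F
    have hkey : coeff i' Q = coeff i F := by
      have h1 : coeff i F = coeff i ((X j - C a) * Q) := by
        rw [hFQ, coeff_add, hcR, add_zero]
      rw [sub_mul, coeff_sub, coeff_C_mul, hciQ, mul_zero, sub_zero] at h1
      have h2 : coeff i (X j * Q) = coeff i' Q := by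
        rw [hidec, coeff_X_mul]
      rw [h2] at h1
      exact h1.symm
    have hcQ : coeff i' Q ≠ 0 := by rw [hkey]; exact hc
    -- sum of i'
    have hsum' : (∑ k, i' k) = n - 1 := by
      have : (∑ k, i k) = 1 + ∑ k, i' k := by
        rw [hidec]
        simp only [Finsupp.add_apply]
        rw [Finset.sum_add_distrib]
        congr 1
        simp [Finsupp.single_apply]
      omega
    -- new sets
    set S' : Fin m → Finset K := Function.update S j ((S j).erase a) with hS'def
    have hS' : ∀ k, i' k < (S' k).card := by
      intro k
      by_cases hk : k = j
      · subst hk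
        rw [hS'def, Function.update_self, Finset.card_erase_of_mem ha]
        have h1 : i' k = i k - 1 := by
          rw [hi', Finsupp.tsub_apply, Finsupp.single_apply]
          simp
        rw [h1]
        have := hS k
        omega
      · rw [hS'def, Function.update_of_ne hk]
        have h1 : i' k = i k := by
          rw [hi', Finsupp.tsub_apply, Finsupp.single_apply, if_neg (Ne.symm hk)]
          omega
        rw [h1]
        exact hS k
    obtain ⟨s, hs, hQs⟩ := IH (n - 1) (by omega) Q i' hcQ (by omega) hsum' S' hS'
    have hsja : s j ≠ a := by
      have := hs j
      rw [hS'def, Function.update_self] at this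
      exact Finset.ne_of_mem_erase this
    have hsgrid : ∀ k, s k ∈ S k := by
      intro k
      have := hs k
      by_cases hk : k = j
      · subst hk
        rw [hS'def, Function.update_self] at this
        exact Finset.mem_of_mem_erase this
      · rwa [hS'def, Function.update_of_ne hk] at this
    -- evaluate
    have hevalR : eval s R = 0 := by
      rw [hR, eval_subst]
      apply hcon
      intro k
      by_cases hk : k = j
      · subst hk; rw [Function.update_self]; exact ha
      · rw [Function.update_of_ne hk]; exact hsgrid k
    have : eval s F = (s j - a) * eval s Q := by
      rw [hFQ]
      simp [hevalR]
    have hne : eval s F ≠ 0 := by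
      rw [this]
      exact mul_ne_zero (sub_ne_zero_of_ne hsja) hQs
    exact hne (hcon s hsgrid)

end Aux

/-- Alon's combinatorial Nullstellensatz. -/
theorem alon_combinatorial_nullstellensatz {K : Type*} [Field K] {m : ℕ}
    (F : MvPolynomial (Fin m) K) (i : Fin m →₀ ℕ)
    (hc : MvPolynomial.coeff i F ≠ 0) (hd : F.totalDegree = ∑ j, i j)
    (S : Fin m → Finset K) (hS : ∀ j, i j < (S j).card) :
    ∃ s : Fin m → K, (∀ j, s j ∈ S j) ∧ MvPolynomial.eval s F ≠ 0 := by
  exact alon_aux (∑ j, i j) F i hc (le_of_eq hd) rfl S hS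
end

section
/- Generalized Alon decomposition: if F ∈ F[x₁,...,xₘ] vanishes at every point of S = S₁×···×Sₘ (S₁,...,Sₘ ⊆ F finite), then there exist polynomials H₁,...,Hₘ ∈ F[x₁,...,xₘ] with deg H_j + #S_j ≤ deg F for all j, such that F = Σ_{j=1}^m H_j(x)·G_j(x_j), where G_j(x_j) = ∏_{s∈S_j}(x_j − s). -/
open MvPolynomial

/-- A polynomial of degree `< #S j` in each variable `j` that vanishes on the grid is zero. -/
theorem grid_vanish_zero {K : Type*} [Field K] : ∀ {m : ℕ} (S : Fin m → Finset K)
    (r : MvPolynomial (Fin m) K), (∀ j, r.degreeOf j < (S j).card) →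
    (∀ s : Fin m → K, (∀ j, s j ∈ S j) → MvPolynomial.eval s r = 0) → r = 0 := by
  intro m
  induction m with
  | zero =>
    intro S r _ hv
    have : eval (fun i : Fin 0 => i.elim0) r = 0 := hv _ (fun j => j.elim0)
    have hr : r = C (eval (fun i : Fin 0 => i.elim0) r) := by
      apply (MvPolynomial.eq_C_of_isEmpty r).trans
      congr 1
      rw [MvPolynomial.eq_C_of_isEmpty r]
      simp
    rw [hr, this, map_zero]
  | succ n IH =>
    intro S r hdeg hv
    set q := finSuccEquiv K n r with hq
    have hcoeff : ∀ i, q.coeff i = 0 := by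
      intro i
      apply IH (fun j => S j.succ)
      · intro j
        exact lt_of_le_of_lt (degreeOf_coeff_finSuccEquiv r j i) (hdeg j.succ)
      · intro s hs
        have hp : (q.map (eval s)) = 0 := by
          apply Polynomial.eq_zero_of_natDegree_lt_card_of_eval_eq_zero' _ (S 0)
          · intro y hy
            rw [← eval_eq_eval_mv_eval']
            apply hv
            intro j
            refine Fin.cases ?_ ?_ j
            · simpa using hy
            · intro k; simpa using hs k
          · calc (q.map (eval s)).natDegree ≤ q.natDegree := Polynomial.natDegree_map_le
              _ = degreeOf 0 r := natDegree_finSuccEquiv r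
              _ < (S 0).card := hdeg 0
        have := congrArg (fun p => Polynomial.coeff p i) hp
        simpa using this
    have : q = 0 := Polynomial.ext fun i => by simp [hcoeff i]
    have := congrArg (finSuccEquiv K n).symm this
    simpa [hq] using this

theorem aux_totalDegree_aeval_X_le {K : Type*} [Field K] {m : ℕ} (j : Fin m) (p : Polynomial K) :
    ((Polynomial.aeval (X j : MvPolynomial (Fin m) K)) p).totalDegree ≤ p.natDegree := by
  rw [Polynomial.aeval_eq_sum_range]
  apply (totalDegree_finset_sum _ _).trans
  apply Finset.sup_le
  intro i hi
  apply (totalDegree_smul_le _ _).trans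
  rw [totalDegree_X_pow]
  have := Finset.mem_range.mp hi
  omega

/-- The tail of `G j` below its leading term has total degree `< #S j` (or ≤ card - 1). -/
theorem aux_tail_deg {K : Type*} [Field K] {m : ℕ} (S : Fin m → Finset K) (j : Fin m) :
    ((X j : MvPolynomial (Fin m) K) ^ (S j).card - ∏ s ∈ S j, (X j - C s)).totalDegree
      ≤ (S j).card - 1 := by
  set g : Polynomial K := ∏ s ∈ S j, (Polynomial.X - Polynomial.C s) with hg
  have hmonic : g.Monic := Polynomial.monic_prod_of_monic _ _ fun s _ => Polynomial.monic_X_sub_C s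
  have hdeg : g.natDegree = (S j).card := by
    rw [hg, Polynomial.natDegree_prod]
    · simp
    · intro s _; exact (Polynomial.monic_X_sub_C s).ne_zero
  have key : (X j : MvPolynomial (Fin m) K) ^ (S j).card - ∏ s ∈ S j, (X j - C s)
      = Polynomial.aeval (X j : MvPolynomial (Fin m) K) (Polynomial.X ^ (S j).card - g) := by
    rw [map_sub, map_pow, Polynomial.aeval_X, hg, map_prod]
    simp
  rw [key]
  apply (aux_totalDegree_aeval_X_le j _).trans
  rcases eq_or_ne (Polynomial.X ^ (S j).card - g) 0 with h | h
  · simp [h]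
  · have hlt : (Polynomial.X ^ (S j).card - g).degree < ((S j).card : WithBot ℕ) := by
      have := Polynomial.degree_sub_lt (p := (Polynomial.X : Polynomial K) ^ (S j).card) (q := g)
        (by rw [Polynomial.degree_X_pow, Polynomial.degree_eq_natDegree hmonic.ne_zero, hdeg])
        (pow_ne_zero _ Polynomial.X_ne_zero)
        (by rw [Polynomial.leadingCoeff_X_pow, hmonic.leadingCoeff])
      rwa [Polynomial.degree_X_pow] at this
    have h2 : (Polynomial.X ^ (S j).card - g).natDegree < (S j).card :=
      (Polynomial.natDegree_lt_iff_degree_lt h).mpr hlt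
    omega


theorem aux_dec {K : Type*} [Field K] {m : ℕ} (S : Fin m → Finset K)
    (hS : ∀ j, 0 < (S j).card) :
    ∀ (n : ℕ) (F : MvPolynomial (Fin m) K), F.totalDegree ≤ n →
    ∃ (H : Fin m → MvPolynomial (Fin m) K) (r : MvPolynomial (Fin m) K),
      F = (∑ j, H j * ∏ s ∈ S j, (X j - C s)) + r ∧
      (∀ j, H j = 0 ∨ (H j).totalDegree + (S j).card ≤ n) ∧
      (∀ j, r.degreeOf j < (S j).card) := by
  intro n
  induction n using Nat.strong_induction_on with
  | _ n IH =>
  intro F hF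
  set Dec : MvPolynomial (Fin m) K → Prop := fun P =>
    ∃ (H : Fin m → MvPolynomial (Fin m) K) (r : MvPolynomial (Fin m) K),
      P = (∑ j, H j * ∏ s ∈ S j, (X j - C s)) + r ∧
      (∀ j, H j = 0 ∨ (H j).totalDegree + (S j).card ≤ n) ∧
      (∀ j, r.degreeOf j < (S j).card) with hDec
  have dec_zero : Dec 0 := by
    refine ⟨0, 0, by simp, fun j => Or.inl rfl, fun j => by simpa using hS j⟩
  have dec_add : ∀ P Q, Dec P → Dec Q → Dec (P + Q) := by
    rintro P Q ⟨H1, r1, he1, hb1, hr1⟩ ⟨H2, r2, he2, hb2, hr2⟩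
    refine ⟨H1 + H2, r1 + r2, ?_, ?_, ?_⟩
    · rw [he1, he2]
      have hsum : (∑ j, (H1 + H2) j * ∏ s ∈ S j, (X j - C s))
          = (∑ j, H1 j * ∏ s ∈ S j, (X j - C s)) + ∑ j, H2 j * ∏ s ∈ S j, (X j - C s) := by
        rw [← Finset.sum_add_distrib]
        apply Finset.sum_congr rfl
        intro j _
        simp only [Pi.add_apply]
        ring
      rw [hsum]
      ring
    · intro j
      simp only [Pi.add_apply]
      rcases hb1 j with h1 | h1
      · rw [h1, zero_add]; exact hb2 j
      rcases hb2 j with h2 | h2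
      · rw [h2, add_zero]; exact Or.inr h1
      · refine Or.inr ?_
        have hm : (H1 j + H2 j).totalDegree ≤ max (H1 j).totalDegree (H2 j).totalDegree :=
          totalDegree_add (H1 j) (H2 j)
        have h3 : max (H1 j).totalDegree (H2 j).totalDegree + (S j).card ≤ n := by
          rcases le_total (H1 j).totalDegree (H2 j).totalDegree with h | h
          · rwa [max_eq_right h]
          · rwa [max_eq_left h]
        omega
    · intro j
      exact lt_of_le_of_lt (degreeOf_add_le _ _ _) (max_lt (hr1 j) (hr2 j))
  have dec_mono : ∀ (μ : Fin m →₀ ℕ) (c : K), (μ.sum fun _ e => e) ≤ n → Dec (monomial μ c) := by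
    intro μ c hμ
    by_cases hall : ∀ j, μ j < (S j).card
    · refine ⟨0, monomial μ c, by simp, fun j => Or.inl rfl, ?_⟩
      intro j
      have : (monomial μ c).degreeOf j ≤ μ j := by
        rw [degreeOf_le_iff]
        intro d hd
        have := support_monomial_subset hd
        simp only [Finset.mem_singleton] at this
        rw [this]
      exact lt_of_le_of_lt this (hall j)
    · push_neg at hall
      obtain ⟨j, hj⟩ := hall
      set d := (S j).card with hd
      set ν : Fin m →₀ ℕ := μ - Finsupp.single j d with hν
      have hsum : ν + Finsupp.single j d = μ := by
        ext i
        rcases eq_or_ne i j with rfl | hij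
        · simp [hν, Finsupp.single_apply]
          omega
        · simp [hν, Finsupp.single_apply, hij, Ne.symm hij]
      have hνsum : (ν.sum fun _ e => e) + d = μ.sum fun _ e => e := by
        rw [← hsum, Finsupp.sum_add_index (by simp) (by simp)]
        simp
      have hmono : monomial μ c = monomial ν c * X j ^ d := by
        rw [X_pow_eq_monomial, monomial_mul, mul_one, hsum]
      have hsplit : monomial μ c = monomial ν c * (∏ s ∈ S j, (X j - C s))
          + monomial ν c * (X j ^ d - ∏ s ∈ S j, (X j - C s)) := by
        rw [hmono]; ring
      rw [hsplit]
      apply dec_add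
      · -- the G j multiple part
        refine ⟨fun i => if i = j then monomial ν c else 0, 0, ?_, ?_, fun i => by simpa using hS i⟩
        · rw [Finset.sum_eq_single j (by intro b _ hb; simp [hb]) (by simp)]
          simp
        · intro i
          beta_reduce
          rcases eq_or_ne i j with rfl | hij
          · rcases eq_or_ne c 0 with rfl | hc
            · exact Or.inl (by simp)
            · refine Or.inr ?_
              rw [if_pos rfl, totalDegree_monomial _ hc]
              omega
          · exact Or.inl (by simp [hij])
      · -- the lower-degree part, use IH
        have hd1 : 1 ≤ d := hS j
        have hdμ : d ≤ μ.sum fun _ e => e := by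
          calc d ≤ μ j := hj
            _ ≤ μ.sum fun _ e => e := by
              rcases eq_or_ne (μ j) 0 with h0 | h0
              · rw [h0]; exact Nat.zero_le _
              · rw [Finsupp.sum]
                exact Finset.single_le_sum (fun i _ => Nat.zero_le _)
                  (Finsupp.mem_support_iff.mpr h0)
        have hn1 : 1 ≤ n := le_trans hd1 (le_trans hdμ hμ)
        have htd : (monomial ν c * (X j ^ d - ∏ s ∈ S j, (X j - C s))).totalDegree ≤ n - 1 := by
          apply (totalDegree_mul _ _).trans
          have h1 : (monomial ν c).totalDegree ≤ ν.sum fun _ e => e := totalDegree_monomial_le _ _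
          have h2 := aux_tail_deg S j
          rw [← hd] at h2
          omega
        obtain ⟨H, r, he, hb, hr⟩ := IH (n - 1) (by omega) _ htd
        exact ⟨H, r, he, fun i => (hb i).imp id (fun h => by omega), hr⟩
  -- now sum over support
  have hdec : Dec (∑ μ ∈ F.support, monomial μ (coeff μ F)) :=
    Finset.sum_induction _ Dec dec_add dec_zero
      (fun μ hμ => dec_mono μ _ (le_trans (le_totalDegree hμ) hF))
  have hDF : Dec F := by rw [F.as_sum]; exact hdec
  exact hDF

/-- Generalized Alon decomposition: a polynomial vanishing on the grid `S₁ × ⋯ × Sₘ` is a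
combination `Σ H_j G_j` with degree control. -/
theorem alon_decomposition {K : Type*} [Field K] {m : ℕ} (S : Fin m → Finset K)
    (F : MvPolynomial (Fin m) K)
    (hF : ∀ s : Fin m → K, (∀ j, s j ∈ S j) → MvPolynomial.eval s F = 0) :
    ∃ H : Fin m → MvPolynomial (Fin m) K,
      (∀ j, H j = 0 ∨ (H j).totalDegree + (S j).card ≤ F.totalDegree) ∧
      F = ∑ j, H j * ∏ s ∈ S j, (X j - C s) := by
  by_cases hS : ∀ j, 0 < (S j).card
  · obtain ⟨H, r, he, hb, hr⟩ := aux_dec S hS F.totalDegree F le_rfl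
    have hr0 : r = 0 := by
      apply grid_vanish_zero S r hr
      intro s hs
      have hGs : ∀ j : Fin m, eval s (∏ t ∈ S j, (X j - C t)) = 0 := by
        intro j
        rw [map_prod]
        apply Finset.prod_eq_zero (hs j)
        simp
      have := congrArg (eval s) he
      rw [hF s hs] at this
      rw [map_add, map_sum] at this
      simp only [map_mul, hGs, mul_zero] at this
      simpa using this.symm
    exact ⟨H, hb, by rw [he, hr0, add_zero]⟩
  · push_neg at hS
    obtain ⟨j, hj⟩ := hS
    have hj0 : (S j) = ∅ := by
      rw [← Finset.card_eq_zero]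
      omega
    refine ⟨fun i => if i = j then F else 0, ?_, ?_⟩
    · intro i
      beta_reduce
      rcases eq_or_ne i j with rfl | hij
      · rw [if_pos rfl]
        refine Or.inr ?_
        rw [hj0]
        simp
      · exact Or.inl (by simp [hij])
    · rw [Finset.sum_eq_single j (by intro b _ hb; simp [hb]) (by simp)]
      beta_reduce
      rw [if_pos rfl, hj0]
      simp
end

section
/- Alon–Füredi bound: let F ∈ F[x₁,...,xₘ] and S = S₁×···×Sₘ a finite grid. If F does not vanish at every point of S, then the number of points of S where F is nonzero is at least min{∏_{j=1}^m y_j : 1 ≤ y_j ≤ #S_j for all j, and Σ_j y_j ≥ Σ_j #S_j − deg F}. -/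
/-!
Dividing `F` by the grid polynomials `∏ s ∈ S i, (X i - C s)` (with respect to degLex) gives a
remainder `Q` that agrees with `F` on the grid, has no larger total degree, and has
`degreeOf i Q < #(S i)` for all `i`. For such a `Q ≠ 0` induct on the number of variables: let
`d = degreeOf 0 Q` and let `Q_d` be the leading coefficient of `Q` as a polynomial in `X 0`. Then
`Q_d ≠ 0` is again reduced with `totalDegree Q_d + d ≤ totalDegree Q`, and over every point `a` of
the smaller grid with `Q_d(a) ≠ 0` the univariate polynomial `Q(·, a) ≠ 0` has at most `d` roots,
so `Q` has at least `#(S 0) - d ≥ 1` nonzeros on that fibre. Hence `y 0 = #(S 0) - d` extends the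
exponents given by induction for `Q_d`.
-/

open Finset Fintype MvPolynomial

namespace MonomialOrder

theorem degree_prod_X_sub_C {σ R : Type*} [CommRing R] [Nontrivial R] (m : MonomialOrder σ)
    (i : σ) (S : Finset R) : m.degree (∏ s ∈ S, (X i - C s)) = Finsupp.single i #S := by
  rw [degree_prod_of_regular fun s _ ↦ by rw [m.monic_X_sub_C]; exact isRegular_one]
  simp [m.degree_X_sub_C]

end MonomialOrder

namespace MvPolynomial

open MonomialOrder

variable {σ R : Type*} [CommRing R]

theorem exists_degreeOf_lt_card_eval_eq [Finite σ] [Nontrivial R] (S : σ → Finset R)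
    (hS : ∀ i, (S i).Nonempty) (f : MvPolynomial σ R) :
    ∃ r : MvPolynomial σ R, r.totalDegree ≤ f.totalDegree ∧ (∀ i, r.degreeOf i < #(S i)) ∧
      ∀ x : σ → R, (∀ i, x i ∈ S i) → eval x r = eval x f := by
  let : LinearOrder σ := WellOrderingRel.isWellOrder.linearOrder
  set b : σ → MvPolynomial σ R := fun i ↦ ∏ s ∈ S i, (X i - C s)
  obtain ⟨g, r, hf, hg, hr⟩ := degLex.div (b := b)
    (fun i ↦ by
      rw [(Monic.prod fun s _ ↦ degLex.monic_X_sub_C i s).leadingCoeff_eq_one]; exact isUnit_one) f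
  have hcomb : Finsupp.linearCombination _ b g = ∑ i ∈ g.support, b i * g i := by
    simp [Finsupp.linearCombination_apply, Finsupp.sum, mul_comm]
  refine ⟨r, ?_, fun i ↦ ?_, fun x hx ↦ ?_⟩
  · have hcomb_le : (Finsupp.linearCombination _ b g).totalDegree ≤ f.totalDegree := by
      rw [hcomb]
      exact (totalDegree_finsetSum _ _).trans
        (Finset.sup_le fun i _ ↦ degLex_totalDegree_monotone (hg i))
    rw [eq_sub_of_add_eq' hf.symm]
    exact (totalDegree_sub _ _).trans (max_le le_rfl hcomb_le)
  · rw [degreeOf_eq_sup, Finset.sup_lt_iff (by simpa using hS i)]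
    intro c hc
    simpa [b, degLex.degree_prod_X_sub_C, Finsupp.single_le_iff] using hr c hc i
  · have hb : ∀ i, eval x (b i) = 0 := fun i ↦ by
      simpa [b, eval_prod] using prod_eq_zero (hx i) (by simp)
    simp [hf, hcomb, hb]

end MvPolynomial

theorem Polynomial.card_sub_natDegree_le_card_filter_eval_ne_zero {R : Type*} [CommRing R]
    [IsDomain R] [DecidableEq R] {p : Polynomial R} (hp : p ≠ 0) (S : Finset R) :
    #S - p.natDegree ≤ #{x ∈ S | p.eval x ≠ 0} := by
  have hroots : #{x ∈ S | p.eval x = 0} ≤ p.natDegree :=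
    card_le_degree_of_subset_roots fun x hx ↦ by
      rw [mem_roots hp]
      exact (mem_filter.1 hx).2
  have := card_filter_add_card_filter_not (s := S) (p := fun x ↦ p.eval x = 0)
  simp only [ne_eq]
  omega

theorem Fin.card_filter_piFinset_eq_sum {n : ℕ} {α : Fin (n + 1) → Type*}
    (S : ∀ i, Finset (α i)) (p : (∀ i, α i) → Prop) [DecidablePred p] :
    #{s ∈ piFinset S | p s} =
      ∑ a ∈ piFinset (Fin.tail S), #{x ∈ S 0 | p (Fin.cons x a)} := by
  have hgrid := filter_piFinset_eq_map_consEquiv S (fun _ ↦ True)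
  simp only [filter_true] at hgrid
  rw [hgrid, filter_map, card_map, card_filter, sum_product_right]
  refine sum_congr rfl fun a _ ↦ ?_
  rw [card_filter]
  rfl

namespace MvPolynomial

variable {R : Type*} [CommRing R] [IsDomain R] [DecidableEq R]

theorem card_sub_degreeOf_mul_card_le_card_filter_eval_ne_zero {n : ℕ} (S : Fin (n + 1) → Finset R)
    (Q : MvPolynomial (Fin (n + 1)) R) (i : ℕ) :
    (#(S 0) - Q.degreeOf 0) *
        #{a ∈ piFinset (Fin.tail S) | eval a ((finSuccEquiv R n Q).coeff i) ≠ 0} ≤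
      #{s ∈ piFinset S | eval s Q ≠ 0} := by
  rw [Fin.card_filter_piFinset_eq_sum, mul_comm, ← smul_eq_mul, ← sum_const]
  refine (sum_le_sum fun a ha ↦ ?_).trans (sum_le_sum_of_subset (filter_subset _ _))
  have hQa : (finSuccEquiv R n Q).map (eval a) ≠ 0 := fun h ↦
    (mem_filter.1 ha).2 (by rw [← Polynomial.coeff_map, h, Polynomial.coeff_zero])
  simp only [eval_eq_eval_mv_eval']
  calc #(S 0) - Q.degreeOf 0 ≤ #(S 0) - ((finSuccEquiv R n Q).map (eval a)).natDegree := by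
        rw [← natDegree_finSuccEquiv]
        exact Nat.sub_le_sub_left (Polynomial.natDegree_map_le) _
    _ ≤ _ := Polynomial.card_sub_natDegree_le_card_filter_eval_ne_zero hQa _

theorem exists_prod_le_card_filter_eval_ne_zero {m : ℕ} (S : Fin m → Finset R)
    (Q : MvPolynomial (Fin m) R) (hQ : Q ≠ 0) (hdeg : ∀ j, Q.degreeOf j < #(S j)) :
    ∃ y : Fin m → ℕ, (∀ j, 1 ≤ y j ∧ y j ≤ #(S j)) ∧ ∑ j, #(S j) ≤ ∑ j, y j + Q.totalDegree ∧
      ∏ j, y j ≤ #{s ∈ piFinset S | eval s Q ≠ 0} := by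
  induction m with
  | zero =>
    refine ⟨Fin.elim0, fun j ↦ j.elim0, by simp, ?_⟩
    have hQx : eval Fin.elim0 Q ≠ 0 := by
      rwa [eq_C_of_isEmpty Q, eval_C, ne_eq, ← C_eq_zero, ← eq_C_of_isEmpty]
    exact card_pos.2 ⟨Fin.elim0, mem_filter.2 ⟨mem_piFinset.2 fun j ↦ j.elim0, hQx⟩⟩
  | succ m ih =>
    set P := finSuccEquiv R m Q
    have hP : P ≠ 0 := by simpa [P] using hQ
    have hlc : P.leadingCoeff ≠ 0 := Polynomial.leadingCoeff_ne_zero.2 hP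
    obtain ⟨y, hy, hsum, hprod⟩ := ih (Fin.tail S) P.leadingCoeff hlc fun j ↦
      (degreeOf_coeff_finSuccEquiv Q j _).trans_lt (hdeg j.succ)
    have hdeg_lc : P.leadingCoeff.totalDegree + Q.degreeOf 0 ≤ Q.totalDegree := by
      rw [← natDegree_finSuccEquiv]
      exact totalDegree_coeff_finSuccEquiv_add_le _ _ hlc
    have hy₀ : 1 ≤ #(S 0) - Q.degreeOf 0 ∧ #(S 0) - Q.degreeOf 0 ≤ #(S 0) := by
      have := hdeg 0
      omega
    refine ⟨Fin.cons (#(S 0) - Q.degreeOf 0) y, Fin.cases hy₀ hy, ?_, ?_⟩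
    · simp only [Fin.sum_univ_succ, Fin.cons_zero, Fin.cons_succ]
      simp only [Fin.tail] at hsum
      omega
    · rw [Fin.prod_univ_succ]
      simp only [Fin.cons_zero, Fin.cons_succ]
      exact (Nat.mul_le_mul_left _ hprod).trans
        (card_sub_degreeOf_mul_card_le_card_filter_eval_ne_zero S Q _)

end MvPolynomial

/-- Alon–Füredi bound on the number of nonzeros of a polynomial in a grid. -/
theorem alon_furedi {K : Type*} [Field K] {m : ℕ} (F : MvPolynomial (Fin m) K)
    (S : Fin m → Finset K)
    (h : ∃ s : Fin m → K, (∀ j, s j ∈ S j) ∧ MvPolynomial.eval s F ≠ 0) :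
    ((sInf {n : ℕ | ∃ y : Fin m → ℕ, (∀ j, 1 ≤ y j ∧ y j ≤ (S j).card) ∧
        (∑ j, (S j).card) ≤ (∑ j, y j) + F.totalDegree ∧ n = ∏ j, y j} : ℕ) : ℕ∞)
      ≤ {s : Fin m → K | (∀ j, s j ∈ S j) ∧ MvPolynomial.eval s F ≠ 0}.encard := by
  classical
  obtain ⟨s, hs, hFs⟩ := h
  obtain ⟨Q, hQdeg, hQred, hQF⟩ := exists_degreeOf_lt_card_eval_eq S (fun j ↦ ⟨s j, hs j⟩) F
  have hQ : Q ≠ 0 := fun h0 ↦ hFs (by rw [← hQF s hs, h0, map_zero])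
  obtain ⟨y, hy, hsum, hprod⟩ := exists_prod_le_card_filter_eval_ne_zero S Q hQ hQred
  have hnonzero : {s : Fin m → K | (∀ j, s j ∈ S j) ∧ eval s F ≠ 0} =
      ↑{s ∈ piFinset S | eval s Q ≠ 0} := by
    ext x
    simp only [Set.mem_ofPred_eq, coe_filter, mem_piFinset]
    exact and_congr_right fun hx ↦ by rw [hQF x hx]
  rw [hnonzero, Set.encard_coe_eq_coe_finsetCard, Nat.cast_le]
  refine le_trans (Nat.sInf_le ?_) hprod
  exact ⟨y, hy, by omega, rfl⟩
end
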